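/- arXiv:2309.10387 — 2 statements merged into one kernel-verified Lean document; each statement's English description precedes it below -/
import Mathlib

section
/- Let λ ∈ (0,1] and p a positive integer with λp an integer. Then the factorial ratio satisfies ((p−λp)!)/((p+λp)!) ≤ q^p · p^{−2λp} · e^{2λp+1}, where q = (1−λ)^{1−λ}/(1+λ)^{1+λ} ∈ (0,1). -/
/-!
Put `a = p - m = (1 - λ) p` and `b = p + m = (1 + λ) p`. Since `(1 + 1/k)^k ≤ e`, we have
`(k + 1)^(k + 1) ≤ e (k + 1) k^k`; telescoping this from `a` to `b` gives
`a! / b! ≤ e^(b - a) a^a / b^b`, and `a^a / b^b = q^p p^(-2λp)`.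
-/

open Real Nat

lemma add_one_pow_le_exp_one_mul_pow (n : ℕ) : ((n : ℝ) + 1) ^ n ≤ exp 1 * (n : ℝ) ^ n := by
  rcases Nat.eq_zero_or_pos n with rfl | hn
  · simp [one_le_exp zero_le_one]
  · have hn' : (n : ℝ) ≠ 0 := by positivity
    calc ((n : ℝ) + 1) ^ n = (1 + (n : ℝ)⁻¹) ^ n * (n : ℝ) ^ n := by
          rw [← mul_pow]; field_simp
      _ ≤ exp 1 * (n : ℝ) ^ n := by gcongr; exact one_add_inv_pow_le_exp

lemma pow_self_mul_factorial_le (a d : ℕ) :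
    ((a + d : ℕ) : ℝ) ^ (a + d) * a ! ≤ exp d * (a : ℝ) ^ a * (a + d)! := by
  induction d with
  | zero => simp
  | succ d ih =>
    set n := a + d
    have := add_one_pow_le_exp_one_mul_pow n
    calc ((a + (d + 1) : ℕ) : ℝ) ^ (a + (d + 1)) * a !
        = ((n : ℝ) + 1) * (((n : ℝ) + 1) ^ n * a !) := by push_cast [n]; ring
      _ ≤ ((n : ℝ) + 1) * (exp 1 * (n : ℝ) ^ n * a !) := by gcongr
      _ = ((n : ℝ) + 1) * (exp 1 * ((n : ℝ) ^ n * a !)) := by ring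
      _ ≤ ((n : ℝ) + 1) * (exp 1 * (exp d * (a : ℝ) ^ a * n !)) := by gcongr
      _ = exp (d + 1 : ℕ) * (a : ℝ) ^ a * (a + (d + 1))! := by
          rw [show a + (d + 1) = n + 1 by omega, factorial_succ]
          push_cast; rw [exp_add]; ring

lemma factorial_div_factorial_add_le (a d : ℕ) :
    (a ! : ℝ) / (a + d)! ≤ exp d * (a : ℝ) ^ a / ((a + d : ℕ) : ℝ) ^ (a + d) := by
  rw [div_le_div_iff₀ (by positivity) ?_]
  · simpa [mul_comm] using pow_self_mul_factorial_le a d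
  rcases Nat.eq_zero_or_pos (a + d) with h | h
  · simp [h]
  · positivity

lemma rpow_self_pos {x : ℝ} (hx : 0 ≤ x) : 0 < x ^ x := by
  rcases hx.eq_or_lt with rfl | hx
  · simp
  · exact rpow_pos_of_pos hx x

lemma rpow_self_div_rpow_self_mem_Ioo {lam : ℝ} (hlam : 0 < lam) (hlam1 : lam ≤ 1) :
    0 < (1 - lam) ^ (1 - lam) / (1 + lam) ^ (1 + lam) ∧
      (1 - lam) ^ (1 - lam) / (1 + lam) ^ (1 + lam) < 1 := by
  have hden : 1 < (1 + lam) ^ (1 + lam) := one_lt_rpow (by linarith) (by linarith)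
  have hnum : (1 - lam) ^ (1 - lam) ≤ 1 := rpow_le_one (by linarith) (by linarith) (by linarith)
  exact ⟨div_pos (rpow_self_pos (by linarith)) (by linarith),
    (div_lt_one (by linarith)).2 (by linarith)⟩

lemma natCast_pow_self_eq {k : ℕ} {c x : ℝ} (hc : 0 ≤ c) (hx : 0 ≤ x)
    (hk : (k : ℝ) = c * x) :
    (k : ℝ) ^ k = (c ^ c) ^ x * x ^ (c * x) := by
  rw [← rpow_natCast, hk, mul_rpow hc hx, ← rpow_mul hc, mul_comm c x]

theorem stmt_6 (lam : ℝ) (p m : ℕ) (hlam : 0 < lam) (hlam1 : lam ≤ 1) (hp : 0 < p)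
    (hm : (m : ℝ) = lam * p) :
    (0 < (1 - lam) ^ (1 - lam) / (1 + lam) ^ (1 + lam) ∧
     (1 - lam) ^ (1 - lam) / (1 + lam) ^ (1 + lam) < 1) ∧
    ((p - m).factorial : ℝ) / ((p + m).factorial : ℝ)
      ≤ ((1 - lam) ^ (1 - lam) / (1 + lam) ^ (1 + lam)) ^ p *
        (p : ℝ) ^ (-(2 * lam * p)) * Real.exp (2 * lam * p + 1) := by
  refine ⟨rpow_self_div_rpow_self_mem_Ioo hlam hlam1, ?_⟩
  have hp0 : (0 : ℝ) < p := by exact_mod_cast hp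
  have hmp : m ≤ p := by exact_mod_cast (show (m : ℝ) ≤ p by rw [hm]; nlinarith)
  have hsub : ((p - m : ℕ) : ℝ) ^ (p - m)
      = ((1 - lam) ^ (1 - lam)) ^ (p : ℝ) * (p : ℝ) ^ ((1 - lam) * p) :=
    natCast_pow_self_eq (by linarith) hp0.le (by rw [Nat.cast_sub hmp, hm]; ring)
  have hadd : ((p + m : ℕ) : ℝ) ^ (p + m)
      = ((1 + lam) ^ (1 + lam)) ^ (p : ℝ) * (p : ℝ) ^ ((1 + lam) * p) :=
    natCast_pow_self_eq (by linarith) hp0.le (by push_cast; rw [hm]; ring)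
  have hratio : ((p - m : ℕ) : ℝ) ^ (p - m) / ((p + m : ℕ) : ℝ) ^ (p + m)
      = ((1 - lam) ^ (1 - lam) / (1 + lam) ^ (1 + lam)) ^ p * (p : ℝ) ^ (-(2 * lam * p)) := by
    rw [hsub, hadd, rpow_natCast, rpow_natCast, div_pow,
      show -(2 * lam * p) = (1 - lam) * p - (1 + lam) * p by ring, rpow_sub hp0]
    ring
  have hexp : exp (2 * m : ℕ) ≤ exp (2 * lam * p + 1) := by
    gcongr; push_cast; rw [hm]; linarith
  have hfact := factorial_div_factorial_add_le (p - m) (2 * m)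
  rw [show p - m + 2 * m = p + m by omega, mul_div_assoc, hratio] at hfact
  exact hfact.trans (by rw [mul_comm]; gcongr)
end

section
/- Let C_v, γ_v > 0, K ≥ 1, h ∈ (0,1], and let λ ∈ (0,1] and η > 0 satisfy (γ_v e η)^{2λ} ≤ 1. If hK/p ≤ η for a positive integer p with λp an integer, then C_v² (γ_v h)^{2(λp+1)} K^{2λp+1} · ((p−λp)!/(p+λp)!) ≤ e C_v² h² γ_v² K ((1−λ)^{1−λ}/(1+λ)^{1+λ})^p. -/
/-!
Since `(1 + 1/n)^n ≤ e`, the sequence `n! eⁿ / nⁿ` is nondecreasing, which gives the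
Stirling-type bound `(p - m)! / (p + m)! ≤ e^{2m} (p - m)^{p - m} / (p + m)^{p + m}`.
The resolution condition `hK ≤ ηp` together with `(γ e η)^{2λ} ≤ 1` bounds `(γ h K)^{2m}`
by `(p / e)^{2m}`; the exponentials then cancel, and with `m = λp` the powers of `p`
cancel as well, leaving `((1 - λ)^{1 - λ} / (1 + λ)^{1 + λ})^p`.
-/

open Real Nat

lemma natCast_pow_self_pos (n : ℕ) : (0 : ℝ) < (n : ℝ) ^ n := by
  rcases n with _ | n
  · simp
  · positivity

lemma monotone_factorial_mul_exp_pow_div_pow :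
    Monotone fun n : ℕ => (n ! : ℝ) * exp 1 ^ n / (n : ℝ) ^ n := by
  refine monotone_nat_of_le_succ fun n => ?_
  calc (n ! : ℝ) * exp 1 ^ n / (n : ℝ) ^ n
      ≤ (n ! : ℝ) * exp 1 ^ n * exp 1 / ((n : ℝ) + 1) ^ n := by
        rw [div_le_div_iff₀ (natCast_pow_self_pos n) (by positivity), mul_assoc _ (exp 1)]
        gcongr
        exact add_one_pow_le_exp_one_mul_pow n
    _ = ((n + 1) ! : ℝ) * exp 1 ^ (n + 1) / ((n + 1 : ℕ) : ℝ) ^ (n + 1) := by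
        push_cast [Nat.factorial_succ]
        field_simp
        ring

lemma factorial_div_factorial_le {a b : ℕ} (hab : a ≤ b) :
    (a ! : ℝ) / b ! ≤ exp 1 ^ (b - a) * (a : ℝ) ^ a / (b : ℝ) ^ b := by
  have h := monotone_factorial_mul_exp_pow_div_pow hab
  have hb : exp 1 ^ b = exp 1 ^ (b - a) * exp 1 ^ a := by
    rw [← pow_add, Nat.sub_add_cancel hab]
  simp only [hb] at h
  rw [div_le_div_iff₀ (natCast_pow_self_pos a) (natCast_pow_self_pos b)] at h
  rw [div_le_div_iff₀ (by positivity) (natCast_pow_self_pos b)]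
  exact le_of_mul_le_mul_right (by linear_combination h) (by positivity : (0 : ℝ) < exp 1 ^ a)

lemma rpow_mul_one_sub_rpow_div_one_add_rpow {q lam : ℝ} (hq : 0 < q) (h₁ : 0 ≤ 1 - lam)
    (h₂ : 0 ≤ 1 + lam) :
    q ^ (2 * lam * q) * ((1 - lam) * q) ^ ((1 - lam) * q) / ((1 + lam) * q) ^ ((1 + lam) * q) =
      ((1 - lam) ^ (1 - lam) / (1 + lam) ^ (1 + lam)) ^ q := by
  have hsplit : q ^ ((1 + lam) * q) = q ^ (2 * lam * q) * q ^ ((1 - lam) * q) := by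
    rw [← rpow_add hq]; ring_nf
  rw [mul_rpow h₁ hq.le, mul_rpow h₂ hq.le, div_rpow (rpow_nonneg h₁ _) (rpow_nonneg h₂ _),
    ← rpow_mul h₁, ← rpow_mul h₂, hsplit]
  have : q ^ (2 * lam * q) * q ^ ((1 - lam) * q) ≠ 0 := by positivity
  field_simp

lemma div_exp_pow_mul_factorial_sub_div_factorial_add_le {p m : ℕ} {lam : ℝ} (hp : 0 < p)
    (hlam : lam ≤ 1) (hm : (m : ℝ) = lam * p) :
    ((p : ℝ) / exp 1) ^ (2 * m) * (((p - m) ! : ℝ) / (p + m) !) ≤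
      ((1 - lam) ^ (1 - lam) / (1 + lam) ^ (1 + lam)) ^ p := by
  have hp' : (0 : ℝ) < p := by exact_mod_cast hp
  have hmp : m ≤ p := by exact_mod_cast hm.trans_le (mul_le_of_le_one_left hp'.le hlam)
  have hlam₀ : 0 ≤ lam := nonneg_of_mul_nonneg_left (hm ▸ m.cast_nonneg) hp'
  have hsub : ((p - m : ℕ) : ℝ) = (1 - lam) * p := by push_cast [hmp]; rw [hm]; ring
  have hadd : ((p + m : ℕ) : ℝ) = (1 + lam) * p := by push_cast; rw [hm]; ring
  have hgap : (p + m) - (p - m) = 2 * m := by omega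
  calc ((p : ℝ) / exp 1) ^ (2 * m) * (((p - m) ! : ℝ) / (p + m) !)
      ≤ ((p : ℝ) / exp 1) ^ (2 * m) *
          (exp 1 ^ (2 * m) * ((p - m : ℕ) : ℝ) ^ (p - m) / ((p + m : ℕ) : ℝ) ^ (p + m)) :=
        mul_le_mul_of_nonneg_left (hgap ▸ factorial_div_factorial_le (by omega)) (by positivity)
    _ = (p : ℝ) ^ ((2 * m : ℕ) : ℝ) * ((p - m : ℕ) : ℝ) ^ ((p - m : ℕ) : ℝ) /
          ((p + m : ℕ) : ℝ) ^ ((p + m : ℕ) : ℝ) := by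
        simp only [rpow_natCast, div_pow]
        field_simp
    _ = ((1 - lam) ^ (1 - lam) / (1 + lam) ^ (1 + lam)) ^ (p : ℝ) := by
        rw [hsub, hadd,
          ← rpow_mul_one_sub_rpow_div_one_add_rpow hp' (by linarith) (by linarith)]
        push_cast
        rw [hm, mul_assoc]
    _ = ((1 - lam) ^ (1 - lam) / (1 + lam) ^ (1 + lam)) ^ p := rpow_natCast _ _

lemma mul_mul_pow_le_div_exp_pow_of_le {γ h K η lam : ℝ} {p m : ℕ} (hγ : 0 ≤ γ) (hh : 0 ≤ h)
    (hK : 0 ≤ K) (hη : 0 ≤ η) (hcond : (γ * exp 1 * η) ^ (2 * lam) ≤ 1) (hp : 0 < p)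
    (hm : (m : ℝ) = lam * p) (hres : h * K / p ≤ η) :
    (γ * h * K) ^ (2 * m) ≤ ((p : ℝ) / exp 1) ^ (2 * m) := by
  have hp' : (0 : ℝ) < p := by exact_mod_cast hp
  have hbase : 0 ≤ γ * exp 1 * η := by positivity
  have hcond' : (γ * exp 1 * η) ^ (2 * m) ≤ 1 := by
    have : (γ * exp 1 * η) ^ (2 * m) = ((γ * exp 1 * η) ^ (2 * lam)) ^ p := by
      rw [← rpow_natCast, ← rpow_natCast, ← rpow_mul hbase]
      push_cast
      rw [hm, ← mul_assoc]
    exact this ▸ pow_le_one₀ (rpow_nonneg hbase _) hcond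
  have hhK : γ * h * K ≤ γ * exp 1 * η * (p / exp 1) := by
    have hcancel : γ * exp 1 * η * (p / exp 1) = γ * (η * p) := by field_simp
    rw [hcancel, mul_assoc]
    exact mul_le_mul_of_nonneg_left ((div_le_iff₀ hp').mp hres) hγ
  calc (γ * h * K) ^ (2 * m) ≤ (γ * exp 1 * η * (p / exp 1)) ^ (2 * m) := by gcongr
    _ = (γ * exp 1 * η) ^ (2 * m) * ((p : ℝ) / exp 1) ^ (2 * m) := mul_pow _ _ _
    _ ≤ ((p : ℝ) / exp 1) ^ (2 * m) := mul_le_of_le_one_left (by positivity) hcond'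

theorem stmt_9_general (Cv γv K h η lam : ℝ) (p m : ℕ)
    (hγv : 0 < γv) (hK : 1 ≤ K) (hh : 0 < h)
    (hlam1 : lam ≤ 1) (hη : 0 < η)
    (hcond : (γv * Real.exp 1 * η) ^ (2 * lam) ≤ 1)
    (hp : 0 < p) (hm : (m : ℝ) = lam * p) (hres : h * K / p ≤ η) :
    Cv ^ 2 * (γv * h) ^ (2 * (m + 1)) * K ^ (2 * m + 1) *
        (((p - m).factorial : ℝ) / ((p + m).factorial : ℝ))
      ≤ Real.exp 1 * Cv ^ 2 * h ^ 2 * γv ^ 2 * K *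
        ((1 - lam) ^ (1 - lam) / (1 + lam) ^ (1 + lam)) ^ p := by
  set X := ((1 - lam) ^ (1 - lam) / (1 + lam) ^ (1 + lam)) ^ p
  set ρ := ((p - m) ! : ℝ) / ((p + m) ! : ℝ)
  have hscale :=
    mul_mul_pow_le_div_exp_pow_of_le hγv.le hh.le (by linarith) hη.le hcond hp hm hres
  have hstirling : ((p : ℝ) / exp 1) ^ (2 * m) * ρ ≤ X :=
    div_exp_pow_mul_factorial_sub_div_factorial_add_le hp hlam1 hm
  have hX : 0 ≤ X :=
    (by positivity : (0 : ℝ) ≤ ((p : ℝ) / exp 1) ^ (2 * m) * ρ).trans hstirling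
  calc Cv ^ 2 * (γv * h) ^ (2 * (m + 1)) * K ^ (2 * m + 1) * ρ
      = Cv ^ 2 * γv ^ 2 * h ^ 2 * K * ((γv * h * K) ^ (2 * m) * ρ) := by ring
    _ ≤ Cv ^ 2 * γv ^ 2 * h ^ 2 * K * (((p : ℝ) / exp 1) ^ (2 * m) * ρ) := by gcongr
    _ ≤ Cv ^ 2 * γv ^ 2 * h ^ 2 * K * X := by gcongr
    _ ≤ exp 1 * (Cv ^ 2 * γv ^ 2 * h ^ 2 * K * X) :=
        le_mul_of_one_le_left (by positivity) (one_le_exp zero_le_one)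
    _ = exp 1 * Cv ^ 2 * h ^ 2 * γv ^ 2 * K * X := by ring

theorem stmt_9 (Cv γv K h η lam : ℝ) (p m : ℕ)
    (hCv : 0 < Cv) (hγv : 0 < γv) (hK : 1 ≤ K) (hh : 0 < h) (hh1 : h ≤ 1)
    (hlam : 0 < lam) (hlam1 : lam ≤ 1) (hη : 0 < η)
    (hcond : (γv * Real.exp 1 * η) ^ (2 * lam) ≤ 1)
    (hp : 0 < p) (hm : (m : ℝ) = lam * p) (hres : h * K / p ≤ η) :
    Cv ^ 2 * (γv * h) ^ (2 * (m + 1)) * K ^ (2 * m + 1) *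
        (((p - m).factorial : ℝ) / ((p + m).factorial : ℝ))
      ≤ Real.exp 1 * Cv ^ 2 * h ^ 2 * γv ^ 2 * K *
        ((1 - lam) ^ (1 - lam) / (1 + lam) ^ (1 + lam)) ^ p :=
  stmt_9_general Cv γv K h η lam p m hγv hK hh hlam1 hη hcond hp hm hres
end
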